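/- arXiv:cs/0207040 — 3 statements merged into one kernel-verified Lean document; each statement's English description precedes it below -/
import Mathlib

section
/- If x' ⊆ x and y ⊆ y' are binary relations on a set of arguments, then the least fixpoint of F_{x/y} is contained in the least fixpoint of F_{x'/y'}; that is, weakening the opponent's attack relation or strengthening the proponent's defence relation enlarges the set of justified arguments. -/
/-- The set of `x/y`-acceptable arguments with respect to `S`. -/
def Facc {Arg : Type*} (x y : Arg → Arg → Prop) (S : Set Arg) : Set Arg :=
  {A | ∀ B, x B A → ∃ C ∈ S, y C B}

theorem Facc_mono {Arg : Type*} (x y : Arg → Arg → Prop) : Monotone (Facc x y) := by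
  intro S T hST A hA B hB
  obtain ⟨C, hC, hCB⟩ := hA B hB
  exact ⟨C, hST hC, hCB⟩

/-- `Facc` as an order homomorphism. -/
def Fhom {Arg : Type*} (x y : Arg → Arg → Prop) : Set Arg →o Set Arg :=
  ⟨Facc x y, Facc_mono x y⟩

/-- The least-fixpoint argumentation semantics: the set of `x/y`-justified arguments. -/
def Jlfp {Arg : Type*} (x y : Arg → Arg → Prop) : Set Arg :=
  OrderHom.lfp (Fhom x y)

theorem Fhom_le_Fhom {Arg : Type*} {x x' y y' : Arg → Arg → Prop}
    (hx : ∀ A B, x' A B → x A B) (hy : ∀ A B, y A B → y' A B) :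
    Fhom x y ≤ Fhom x' y' := fun _ A hA B hB ↦
  let ⟨C, hC, hCB⟩ := hA B (hx B A hB)
  ⟨C, hC, hy C B hCB⟩

/-- Weakening the attack relation or strengthening the defence relation
enlarges the set of justified arguments. -/
theorem Jlfp_mono {Arg : Type*} (x x' y y' : Arg → Arg → Prop)
    (hx : ∀ A B, x' A B → x A B) (hy : ∀ A B, y A B → y' A B) :
    Jlfp x y ⊆ Jlfp x' y' :=
  OrderHom.lfp.monotone (Fhom_le_Fhom hx hy)
end

section
/- Let u, x, y be binary relations on a set of arguments with u ⊆ x, and let sy = y - u⁻¹. Then the least fixpoints of F_{x/y} and F_{x/sy} coincide: J_{x/y} = J_{x/sy}. -/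
section

variable {Arg : Type*} {u x y y' sy : Arg → Arg → Prop}

theorem Facc_Jlfp (x y : Arg → Arg → Prop) : Facc x y (Jlfp x y) = Jlfp x y :=
  OrderHom.map_lfp (Fhom x y)

theorem Facc_mono_defence (hy : y ≤ y') (S : Set Arg) : Facc x y S ⊆ Facc x y' S :=
  fun _ hA B hB => (hA B hB).imp fun C ⟨hC, hCB⟩ => ⟨hC, hy C B hCB⟩

theorem Jlfp_mono_defence (hy : y ≤ y') : Jlfp x y ⊆ Jlfp x y' :=
  OrderHom.lfp.monotone fun S => Facc_mono_defence hy S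

theorem Facc_subset_Facc_strong (hux : ∀ A B, u A B → x A B)
    (hsy : ∀ C B, y C B → ¬ u B C → sy C B) {S : Set Arg} (hS : S ⊆ Facc x sy S) :
    Facc x y S ⊆ Facc x sy S := by
  intro A hA B hBA
  obtain ⟨C, hC, hCB⟩ := hA B hBA
  by_cases hBC : u B C
  · exact hS hC B (hux B C hBC)
  · exact ⟨C, hC, hsy C B hCB hBC⟩

end

/-- Strong defence suffices: if `u ⊆ x` and `sy = y - u⁻¹`, then
`J_{x/y} = J_{x/sy}`. -/
theorem Jlfp_strong_defence {Arg : Type*} (u x y sy : Arg → Arg → Prop)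
    (hux : ∀ A B, u A B → x A B)
    (hsy : ∀ A B, sy A B ↔ y A B ∧ ¬ u B A) :
    Jlfp x y = Jlfp x sy := by
  have hJ : Jlfp x sy ⊆ Facc x sy (Jlfp x sy) := (Facc_Jlfp x sy).ge
  apply le_antisymm
  · refine OrderHom.lfp_le _ ?_
    calc Facc x y (Jlfp x sy)
        ⊆ Facc x sy (Jlfp x sy) :=
          Facc_subset_Facc_strong hux (fun C B hCB hBC => (hsy C B).2 ⟨hCB, hBC⟩) hJ
      _ = Jlfp x sy := Facc_Jlfp x sy
  · exact Jlfp_mono_defence fun C B hCB => ((hsy C B).1 hCB).1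
end

section
/- Let u, r be binary relations on a set of arguments with r symmetric, su = u - u⁻¹, sa = (u ∪ r) - u⁻¹. Then J_{sa/su} = J_{sa/sa}. -/
/-!
Weakening the defending relation from `su` to `sa` can only enlarge the justified set. Conversely,
an `sa`-defender `C` of `A` against `B` that is not an `su`-attack on `B` must rebut `B`; by symmetry
of rebut `B` then attacks `C`, and since `C` is already justified, some justified argument
`su`-attacks `B`.
-/

theorem Facc_mono_right {Arg : Type*} {x y y' : Arg → Arg → Prop} (hy : ∀ C B, y C B → y' C B)
    (S : Set Arg) : Facc x y S ⊆ Facc x y' S := fun _ hA B hB =>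
  let ⟨C, hC, hCB⟩ := hA B hB
  ⟨C, hC, hy C B hCB⟩

theorem Jlfp_mono_right {Arg : Type*} {x y y' : Arg → Arg → Prop} (hy : ∀ C B, y C B → y' C B) :
    Jlfp x y ⊆ Jlfp x y' :=
  OrderHom.lfp.monotone fun S => Facc_mono_right hy S

theorem Jlfp_subset_of_counterattacked {Arg : Type*} {x y y' : Arg → Arg → Prop}
    (hy' : ∀ C B, y' C B → y C B ∨ x B C) : Jlfp x y' ⊆ Jlfp x y := by
  have hJ : Facc x y (Jlfp x y) = Jlfp x y := OrderHom.map_lfp (Fhom x y)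
  refine OrderHom.lfp_le _ fun A hA => ?_
  rw [← hJ]
  intro B hBA
  obtain ⟨C, hC, hCB⟩ := hA B hBA
  rcases hy' C B hCB with hy | hBC
  · exact ⟨C, hC, hy⟩
  · rw [← hJ] at hC
    exact hC B hBC

/-- `J_{sa/su} = J_{sa/sa}` for symmetric rebut. -/
theorem Jlfp_sasu_sasa {Arg : Type*} (u r su sa : Arg → Arg → Prop)
    (hr : ∀ A B, r A B → r B A)
    (hsu : ∀ A B, su A B ↔ u A B ∧ ¬ u B A)
    (hsa : ∀ A B, sa A B ↔ (u A B ∨ r A B) ∧ ¬ u B A) :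
    Jlfp sa su = Jlfp sa sa := by
  have hsu_sa : ∀ C B, su C B → sa C B := fun C B h =>
    (hsa C B).2 ⟨Or.inl ((hsu C B).1 h).1, ((hsu C B).1 h).2⟩
  have hsa_counterattacked : ∀ C B, sa C B → su C B ∨ sa B C := by
    intro C B h
    obtain ⟨hur, hnuBC⟩ := (hsa C B).1 h
    by_cases hCB : u C B
    · exact Or.inl ((hsu C B).2 ⟨hCB, hnuBC⟩)
    · exact Or.inr ((hsa B C).2 ⟨Or.inr (hr C B (hur.resolve_left hCB)), hCB⟩)
  exact (Jlfp_mono_right hsu_sa).antisymm (Jlfp_subset_of_counterattacked hsa_counterattacked)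
end
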